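/- arXiv:1902.01063 — 2 statements merged into one kernel-verified Lean document; each statement's English description precedes it below -/
import Mathlib

section
/- Let p > 2 and q > p − 1 with q ≠ p. For every constant Λ > λ₁* there exists a 2π-periodic C¹ function u : ℝ → ℝ such that ‖u'‖_p² < (Λ/(p − q)) · (‖u‖_p² − ‖u‖_q²). (This expresses the upper bound Λ_{p,q} ≤ λ₁* for the sharp constant of the interpolation inequality in Theorem 1.1.) -/
/-!
Take a mean-zero periodic `v` whose quotient `‖v'‖_p² / ‖v‖_2²` is below `Λ` and test the
inequality on `u = 1 + ε v`. The binomial series gives `|1 + t|^r = 1 + r t + r(r-1)/2 t² + o(t²)`;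
averaging kills the linear term, so `‖1 + ε v‖_r² = 1 + (r - 1) ε² ‖v‖_2² + o(ε²)`. Hence the
right-hand side is `Λ ε² ‖v‖_2² + o(ε²)`, which beats `‖u'‖_p² = ε² ‖v'‖_p²` for small `ε ≠ 0`.
-/

open MeasureTheory Real

noncomputable def perNorm (r : ℝ) (u : ℝ → ℝ) : ℝ :=
  ((1 / (2 * π)) * ∫ x in (0:ℝ)..(2 * π), |u x| ^ r) ^ (1 / r)

def PeriodicC1 (u : ℝ → ℝ) : Prop :=
  Function.Periodic u (2 * π) ∧ ContDiff ℝ 1 u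

noncomputable def lambdaOne (p : ℝ) : ℝ :=
  sInf { l : ℝ | ∃ v : ℝ → ℝ, PeriodicC1 v ∧ v ≠ 0 ∧
    (∫ x in (0:ℝ)..(2 * π), v x) = 0 ∧
    l = (perNorm p (deriv v)) ^ 2 / (perNorm p v) ^ 2 }

noncomputable def lambdaOneStar (p : ℝ) : ℝ :=
  sInf { l : ℝ | ∃ v : ℝ → ℝ, PeriodicC1 v ∧ v ≠ 0 ∧
    (∫ x in (0:ℝ)..(2 * π), v x) = 0 ∧
    l = (perNorm p (deriv v)) ^ 2 / (perNorm 2 v) ^ 2 }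

noncomputable def pLap (p : ℝ) (u : ℝ → ℝ) : ℝ → ℝ :=
  deriv (fun x => |deriv u x| ^ (p - 2) * deriv u x)

open Filter Set Topology Asymptotics

theorem HasDerivAt.tendsto_comp_sub_div {𝕜 α : Type*} [NontriviallyNormedField 𝕜]
    {f : 𝕜 → 𝕜} {f' x₀ c : 𝕜} (hf : HasDerivAt f f' x₀) {l : Filter α} {Φ g : α → 𝕜}
    (hΦ : Tendsto Φ l (𝓝 x₀)) (h : Tendsto (fun t => (Φ t - x₀) / g t) l (𝓝 c)) :
    Tendsto (fun t => (f (Φ t) - f x₀) / g t) l (𝓝 (f' * c)) := by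
  have hslope : Tendsto (fun t => dslope f x₀ (Φ t)) l (𝓝 f') := by
    rw [← hf.deriv, ← dslope_same]
    exact (continuousAt_dslope_same.2 hf.differentiableAt).tendsto.comp hΦ
  refine (hslope.mul h).congr fun t => ?_
  rw [← sub_smul_dslope f x₀ (Φ t), smul_eq_mul]
  ring

theorem Real.abs_one_add_rpow_sub_quadratic_isLittleO (r : ℝ) :
    (fun t : ℝ => |1 + t| ^ r - (1 + r * t + r * (r - 1) / 2 * t ^ 2)) =o[𝓝 0] fun t => t ^ 2 := by
  have hchoose : Ring.choose r 2 = r * (r - 1) / 2 := by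
    rw [Ring.choose_eq_smul]
    simp [descPochhammer_succ_right, Polynomial.smeval_mul, Polynomial.smeval_X]
    ring
  have hsum (t : ℝ) :
      (binomialSeries ℝ r).partialSum 3 t = 1 + r * t + r * (r - 1) / 2 * t ^ 2 := by
    simp [FormalMultilinearSeries.partialSum, Finset.sum_range_succ, binomialSeries, hchoose]
    ring
  have htaylor := (one_add_rpow_hasFPowerSeriesAt_zero (a := r)).isBigO_sub_partialSum_pow 3
  simp only [zero_add, hsum, Real.norm_eq_abs] at htaylor
  have hcube : (fun t : ℝ => |t| ^ 3) =o[𝓝 0] fun t => t ^ 2 :=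
    (isLittleO_pow_pow (𝕜 := ℝ) (m := 2) (n := 3) (by norm_num)).norm_left.congr_left
      fun t => by simp
  refine (htaylor.trans_isLittleO hcube).congr' ?_ EventuallyEq.rfl
  filter_upwards [Ioi_mem_nhds (show (-1 : ℝ) < 0 by norm_num)] with t ht
  rw [abs_of_pos (by linarith [mem_Ioi.1 ht])]

noncomputable def circleMean (f : ℝ → ℝ) : ℝ :=
  (1 / (2 * π)) * ∫ x in (0:ℝ)..(2 * π), f x

theorem abs_circleMean_le {f : ℝ → ℝ} {C : ℝ} (h : ∀ x ∈ uIoc 0 (2 * π), |f x| ≤ C) :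
    |circleMean f| ≤ C := by
  have := intervalIntegral.norm_integral_le_of_norm_le_const (f := f) (C := C) h
  rw [circleMean, abs_mul, abs_of_pos (by positivity)]
  rw [Real.norm_eq_abs, sub_zero, abs_of_pos two_pi_pos] at this
  calc 1 / (2 * π) * |∫ x in (0:ℝ)..(2 * π), f x| ≤ 1 / (2 * π) * (C * (2 * π)) := by gcongr
    _ = C := by field_simp

theorem circleMean_nonneg {f : ℝ → ℝ} (h : ∀ x, 0 ≤ f x) : 0 ≤ circleMean f :=
  mul_nonneg (by positivity) (intervalIntegral.integral_nonneg two_pi_pos.le fun x _ => h x)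

theorem perNorm_eq_circleMean (r : ℝ) (u : ℝ → ℝ) :
    perNorm r u = circleMean (fun x => |u x| ^ r) ^ (1 / r) :=
  rfl

theorem perNorm_sq (r : ℝ) (u : ℝ → ℝ) :
    perNorm r u ^ 2 = circleMean (fun x => |u x| ^ r) ^ (2 / r) := by
  rw [perNorm_eq_circleMean, ← Real.rpow_natCast,
    ← Real.rpow_mul (circleMean_nonneg fun x => by positivity)]
  ring_nf

theorem perNorm_two_sq (u : ℝ → ℝ) : perNorm 2 u ^ 2 = circleMean (fun x => u x ^ 2) := by
  rw [perNorm_sq, div_self two_ne_zero, Real.rpow_one]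
  congr with x
  rw [← sq_abs, ← Real.rpow_natCast]
  norm_num

theorem perNorm_const_mul {r : ℝ} (hr : r ≠ 0) (c : ℝ) (u : ℝ → ℝ) :
    perNorm r (fun x => c * u x) = |c| * perNorm r u := by
  have hmean :
      circleMean (fun x => |c * u x| ^ r) = |c| ^ r * circleMean (fun x => |u x| ^ r) := by
    simp only [circleMean, abs_mul, Real.mul_rpow (abs_nonneg _) (abs_nonneg _),
      intervalIntegral.integral_const_mul]
    ring
  rw [perNorm_eq_circleMean, perNorm_eq_circleMean, hmean,
    Real.mul_rpow (by positivity) (circleMean_nonneg fun x => by positivity),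
    ← Real.rpow_mul (abs_nonneg c), mul_one_div_cancel hr, Real.rpow_one]

theorem circleMean_sq_pos {v : ℝ → ℝ} (hv : Continuous v) (hper : Function.Periodic v (2 * π))
    (hne : v ≠ 0) : 0 < circleMean (fun x => v x ^ 2) := by
  obtain ⟨x₀, hx₀⟩ := Function.ne_iff.1 hne
  obtain ⟨y, hy, hxy⟩ := hper.exists_mem_Ico₀ two_pi_pos x₀
  refine mul_pos (by positivity) (intervalIntegral.integral_pos two_pi_pos (by fun_prop)
    (fun x _ => sq_nonneg _) ⟨y, Ico_subset_Icc_self hy, ?_⟩)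
  rw [← hxy]
  exact pow_two_pos_of_ne_zero hx₀

theorem Asymptotics.IsLittleO.circleMean_comp_mul {g v : ℝ → ℝ} (hg : g =o[𝓝 0] fun t => t ^ 2)
    {K : ℝ} (hK : ∀ x ∈ uIoc 0 (2 * π), |v x| ≤ K) :
    (fun ε => circleMean (fun x => g (ε * v x))) =o[𝓝 0] fun ε => ε ^ 2 := by
  set K' := max K 1
  have hK' : 0 < K' := lt_max_of_lt_right one_pos
  rw [isLittleO_iff] at hg ⊢
  intro η hη
  obtain ⟨δ, hδ, hball⟩ := Metric.eventually_nhds_iff.1 (hg (c := η / K' ^ 2) (by positivity))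
  filter_upwards [Metric.ball_mem_nhds 0 (div_pos hδ hK')] with ε hε
  rw [Real.norm_eq_abs, norm_pow, Real.norm_eq_abs, sq_abs]
  refine abs_circleMean_le fun x hx => ?_
  have hvx : |v x| ≤ K' := (hK x hx).trans (le_max_left _ _)
  have hεv : |ε * v x| < δ := by
    rw [Metric.mem_ball, Real.dist_eq, sub_zero, lt_div_iff₀ hK'] at hε
    rw [abs_mul]
    nlinarith [abs_nonneg ε, abs_nonneg (v x)]
  have hsq : (ε * v x) ^ 2 ≤ ε ^ 2 * K' ^ 2 := by
    rw [mul_pow, ← sq_abs (v x)]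
    gcongr
  have hgx := hball (y := ε * v x) (by rwa [Real.dist_eq, sub_zero])
  rw [Real.norm_eq_abs, norm_pow, Real.norm_eq_abs, sq_abs] at hgx
  calc |g (ε * v x)| ≤ η / K' ^ 2 * (ε * v x) ^ 2 := hgx
    _ ≤ η / K' ^ 2 * (ε ^ 2 * K' ^ 2) := by gcongr
    _ = η * ε ^ 2 := by field_simp

theorem tendsto_circleMean_abs_one_add_rpow {r : ℝ} (hr : 0 ≤ r) {v : ℝ → ℝ}
    (hv : ContinuousOn v (uIcc 0 (2 * π))) (hmean : ∫ x in (0:ℝ)..(2 * π), v x = 0) :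
    Tendsto (fun ε => (circleMean (fun x => |1 + ε * v x| ^ r) - 1) / ε ^ 2) (𝓝[≠] 0)
      (𝓝 (r * (r - 1) / 2 * circleMean (fun x => v x ^ 2))) := by
  set c := r * (r - 1) / 2
  set g : ℝ → ℝ := fun t => |1 + t| ^ r - (1 + r * t + c * t ^ 2)
  obtain ⟨K, hK⟩ := isCompact_uIcc.exists_bound_of_continuousOn hv
  have hrem := (Real.abs_one_add_rpow_sub_quadratic_isLittleO r).circleMean_comp_mul
    (v := v) (K := K) fun x hx => hK x (uIoc_subset_uIcc hx)
  have hsplit (ε : ℝ) : circleMean (fun x => |1 + ε * v x| ^ r) - 1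
      = c * circleMean (fun x => v x ^ 2) * ε ^ 2 + circleMean (fun x => g (ε * v x)) := by
    have hint : IntervalIntegrable (fun x => |1 + ε * v x| ^ r) volume 0 (2 * π) :=
      ((continuousOn_const.add (continuousOn_const.mul hv)).abs.rpow_const
        fun _ _ => Or.inr hr).intervalIntegrable
    have hv1 : IntervalIntegrable v volume 0 (2 * π) := hv.intervalIntegrable
    have hv2 : IntervalIntegrable (fun x => v x ^ 2) volume 0 (2 * π) :=
      (hv.pow 2).intervalIntegrable
    have hpoly : ∫ x in (0:ℝ)..(2 * π), (1 + r * (ε * v x) + c * (ε * v x) ^ 2)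
        = 2 * π + c * ε ^ 2 * ∫ x in (0:ℝ)..(2 * π), v x ^ 2 := by
      simp only [mul_pow, ← mul_assoc]
      rw [intervalIntegral.integral_add (intervalIntegrable_const.add (hv1.const_mul _))
          (hv2.const_mul _), intervalIntegral.integral_add (by simp) (hv1.const_mul _),
        intervalIntegral.integral_const_mul, intervalIntegral.integral_const_mul, hmean]
      simp
    simp only [circleMean, g]
    have hpolyInt : IntervalIntegrable (fun x => 1 + r * (ε * v x) + c * (ε * v x) ^ 2)
        volume 0 (2 * π) := (by fun_prop : ContinuousOn _ _).intervalIntegrable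
    rw [intervalIntegral.integral_sub hint hpolyInt, hpoly]
    field_simp
    ring
  have hlim := (hrem.tendsto_div_nhds_zero.mono_left (nhdsWithin_le_nhds (s := {0}ᶜ))).const_add
    (c * circleMean (fun x => v x ^ 2))
  rw [add_zero] at hlim
  refine hlim.congr' ?_
  filter_upwards [self_mem_nhdsWithin] with ε (hε : ε ≠ 0)
  rw [hsplit, add_div, mul_div_cancel_right₀ _ (pow_ne_zero 2 hε)]

theorem tendsto_perNorm_one_add_mul_sq {r : ℝ} (hr : 0 < r) {v : ℝ → ℝ}
    (hv : ContinuousOn v (uIcc 0 (2 * π))) (hmean : ∫ x in (0:ℝ)..(2 * π), v x = 0) :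
    Tendsto (fun ε => (perNorm r (fun x => 1 + ε * v x) ^ 2 - 1) / ε ^ 2) (𝓝[≠] 0)
      (𝓝 ((r - 1) * circleMean (fun x => v x ^ 2))) := by
  have hquad := tendsto_circleMean_abs_one_add_rpow hr.le hv hmean
  have hone : Tendsto (fun ε => circleMean (fun x => |1 + ε * v x| ^ r)) (𝓝[≠] 0) (𝓝 1) := by
    have hsq : Tendsto (fun ε : ℝ => ε ^ 2) (𝓝[≠] 0) (𝓝 0) :=
      ((continuous_pow 2).tendsto' 0 0 (zero_pow two_ne_zero)).mono_left nhdsWithin_le_nhds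
    have := (hquad.mul hsq).add_const 1
    rw [mul_zero, zero_add] at this
    refine this.congr' ?_
    filter_upwards [self_mem_nhdsWithin] with ε (hε : ε ≠ 0)
    field_simp
    ring
  have hpow : HasDerivAt (fun s : ℝ => s ^ (2 / r)) (2 / r) 1 := by
    simpa using Real.hasDerivAt_rpow_const (x := 1) (p := 2 / r) (Or.inl one_ne_zero)
  have := hpow.tendsto_comp_sub_div hone hquad
  simp only [Real.one_rpow] at this
  simp only [perNorm_sq]
  convert this using 2
  field_simp

theorem exists_quotient_lt_of_lambdaOneStar_lt {p L : ℝ} (hL : lambdaOneStar p < L) :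
    ∃ v : ℝ → ℝ, PeriodicC1 v ∧ v ≠ 0 ∧ (∫ x in (0:ℝ)..(2 * π), v x) = 0 ∧
      perNorm p (deriv v) ^ 2 / perNorm 2 v ^ 2 < L := by
  have hsin : sin ≠ 0 := fun h => by simpa using congrFun h (π / 2)
  obtain ⟨_, ⟨v, hv, hv0, hmean, rfl⟩, hlt⟩ := exists_lt_of_csInf_lt
    (by exact ⟨_, sin, ⟨sin_periodic, contDiff_sin⟩, hsin, by simp, rfl⟩) hL
  exact ⟨v, hv, hv0, hmean, hlt⟩

/-- the upper bound Λ_{p,q} ≤ λ₁* for the sharp interpolation constant. -/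
theorem interp_sharp_upper_bound (p q : ℝ) (hp : 2 < p) (hq : p - 1 < q) (hpq : q ≠ p)
    (L : ℝ) (hL : lambdaOneStar p < L) :
    ∃ u : ℝ → ℝ, PeriodicC1 u ∧
      (perNorm p (deriv u)) ^ 2 <
        (L / (p - q)) * ((perNorm p u) ^ 2 - (perNorm q u) ^ 2) := by
  obtain ⟨v, hv, hv0, hmean, hquot⟩ := exists_quotient_lt_of_lambdaOneStar_lt hL
  have hσ := circleMean_sq_pos hv.2.continuous hv.1 hv0
  set σ := circleMean (fun x => v x ^ 2)
  rw [perNorm_two_sq, div_lt_iff₀ hσ] at hquot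
  have hcont := hv.2.continuous.continuousOn (s := uIcc 0 (2 * π))
  have hlim := ((tendsto_perNorm_one_add_mul_sq (r := p) (by linarith) hcont hmean).sub
    (tendsto_perNorm_one_add_mul_sq (r := q) (by linarith) hcont hmean)).const_mul (L / (p - q))
  rw [show L / (p - q) * ((p - 1) * σ - (q - 1) * σ) = L * σ by
    field_simp [sub_ne_zero.2 hpq.symm]; ring] at hlim
  obtain ⟨ε, hεlt, hε0 : ε ≠ 0⟩ :=
    ((hlim.eventually_const_lt hquot).and self_mem_nhdsWithin).exists
  refine ⟨fun x => 1 + ε * v x,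
    ⟨fun x => by simp [hv.1 x], contDiff_const.add (contDiff_const.mul hv.2)⟩, ?_⟩
  rw [deriv_const_add', deriv_const_mul_field', perNorm_const_mul (by linarith), mul_pow, sq_abs]
  rw [← sub_div, sub_sub_sub_cancel_right, ← mul_div_assoc, lt_div_iff₀ (by positivity)] at hεlt
  linarith
end

section
/- Let p > 2 and let u : ℝ → ℝ be a 2π-periodic, strictly positive, C² function. Then (1/(2π))∫₀^{2π} u(x)^{2−p} (L_p u(x))² dx ≥ λ₁ · ‖u'‖_p^{2(p−1)} / ‖u‖_p^{p−2}, where L_p u := (|u'|^{p−2}u')'. -/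
open MeasureTheory Real

/-!
Put `v = u - ū`, which has mean zero and `v' = u'`. Integrating by parts on the circle,
`‖u'‖_p^p = ⨍ u' · |u'|^{p-2} u' = -⨍ (L_p u) v`. Cauchy–Schwarz with the weight `u^{p-2}` bounds
the square of this by `⨍ u^{2-p} (L_p u)² · ⨍ u^{p-2} v²`, and Hölder with exponents
`p/(p-2)` and `p/2` bounds the last factor by `‖u‖_p^{p-2} ‖v‖_p²`. Since `v` is admissible for
`λ₁`, `λ₁ ‖v‖_p² ≤ ‖u'‖_p²`, and dividing out `‖v‖_p²` gives the estimate (if `‖v‖_p = 0`, the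
Cauchy–Schwarz bound already forces `u' = 0`).
-/

theorem hasDerivAt_abs_rpow_mul_self {q : ℝ} (hq : 0 < q) (s : ℝ) :
    HasDerivAt (fun t => |t| ^ q * t) ((q + 1) * |s| ^ q) s := by
  rcases eq_or_ne s 0 with rfl | hs
  · rw [hasDerivAt_iff_isLittleO_nhds_zero]
    have hlim : Filter.Tendsto (fun h : ℝ => |h| ^ q) (nhds 0) (nhds 0) := by
      simpa [zero_rpow hq.ne'] using
        (continuous_abs.rpow_const fun _ => Or.inr hq.le).tendsto (0 : ℝ)
    simpa [zero_rpow hq.ne'] using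
      ((Asymptotics.isLittleO_one_iff ℝ).2 hlim).mul_isBigO (Asymptotics.isBigO_refl id _)
  · refine (((hasDerivAt_abs hs).rpow_const (p := q) (Or.inl (abs_ne_zero.2 hs))).mul
      (hasDerivAt_id s)).congr_deriv ?_
    have habs : |s| ^ q = |s| ^ (q - 1) * |s| := by
      rw [← rpow_add_one (abs_ne_zero.2 hs), sub_add_cancel]
    rw [habs, ← sign_mul_self s, id]
    ring

theorem abs_rpow_sub_two_mul_self_mul_self {p : ℝ} (hp : p ≠ 0) (t : ℝ) :
    |t| ^ (p - 2) * t * t = |t| ^ p := by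
  rcases eq_or_ne t 0 with rfl | ht
  · simp [zero_rpow hp]
  · rw [mul_assoc, ← abs_mul_abs_self, ← mul_assoc, ← rpow_add_one (abs_ne_zero.2 ht),
      ← rpow_add_one (abs_ne_zero.2 ht)]
    ring_nf

theorem Function.Periodic.deriv {f : ℝ → ℝ} {T : ℝ} (hf : Function.Periodic f T) :
    Function.Periodic (deriv f) T := fun x => by
  rw [← deriv_comp_add_const, show (fun y => f (y + T)) = f from funext hf]

theorem Function.Periodic.integral_deriv_mul_eq_neg {f g f' g' : ℝ → ℝ} {T : ℝ}
    (hf : Function.Periodic f T) (hg : Function.Periodic g T)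
    (hf' : ∀ x, HasDerivAt f (f' x) x) (hg' : ∀ x, HasDerivAt g (g' x) x)
    (hf'i : IntervalIntegrable f' volume 0 T) (hg'i : IntervalIntegrable g' volume 0 T) :
    ∫ x in (0:ℝ)..T, f' x * g x = -∫ x in (0:ℝ)..T, f x * g' x := by
  rw [intervalIntegral.integral_mul_deriv_eq_deriv_mul (fun x _ => hf' x) (fun x _ => hg' x)
    hf'i hg'i, hf.eq, hg.eq]
  ring

theorem integral_abs_rpow_mul_sq_le {α : Type*} [MeasurableSpace α] {μ : Measure α} {p : ℝ}
    (hp : 2 < p) {f g : α → ℝ} (hf : MemLp f (ENNReal.ofReal p) μ)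
    (hg : MemLp g (ENNReal.ofReal p) μ) :
    ∫ x, |f x| ^ (p - 2) * g x ^ 2 ∂μ ≤
      (∫ x, |f x| ^ p ∂μ) ^ ((p - 2) / p) * (∫ x, |g x| ^ p ∂μ) ^ (2 / p) := by
  have hp2 : 0 < p - 2 := by linarith
  have hconj : (p / (p - 2)).HolderConjugate (p / 2) :=
    Real.holderConjugate_iff.2 ⟨(one_lt_div hp2).2 (by linarith), by field_simp; ring⟩
  have hf' : MemLp (fun x => |f x| ^ (p - 2)) (ENNReal.ofReal (p / (p - 2))) μ := by
    have := hf.norm_rpow_div (ENNReal.ofReal (p - 2))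
    rwa [ENNReal.toReal_ofReal hp2.le, ← ENNReal.ofReal_div_of_pos hp2] at this
  have hg' : MemLp (fun x => g x ^ 2) (ENNReal.ofReal (p / 2)) μ := by
    have := hg.norm_rpow_div (ENNReal.ofReal 2)
    rw [ENNReal.toReal_ofReal zero_le_two, ← ENNReal.ofReal_div_of_pos two_pos] at this
    simpa only [Real.norm_eq_abs, rpow_two, sq_abs] using this
  have h := integral_mul_le_Lp_mul_Lq_of_nonneg hconj
    (ae_of_all _ fun x => rpow_nonneg (abs_nonneg (f x)) _) (ae_of_all _ fun x => sq_nonneg _)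
    hf' hg'
  have hfp : ∀ x, (|f x| ^ (p - 2)) ^ (p / (p - 2)) = |f x| ^ p := fun x => by
    rw [← rpow_mul (abs_nonneg _), mul_div_cancel₀ p hp2.ne']
  have hgp : ∀ x, (g x ^ 2) ^ (p / 2) = |g x| ^ p := fun x => by
    rw [← sq_abs, ← rpow_two, ← rpow_mul (abs_nonneg _), mul_div_cancel₀ p two_ne_zero]
  simpa only [hfp, hgp, one_div_div] using h

theorem mul_rpow_div_le_of_sq_le {k a c A B p : ℝ} (hp : 1 < p) (ha : 0 ≤ a) (hA : 0 ≤ A)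
    (hB : 0 ≤ B) (hka : k * c ^ 2 ≤ a ^ 2) (hac : (a ^ p) ^ 2 ≤ A * B * c ^ 2) :
    k * a ^ (2 * (p - 1)) / B ≤ A := by
  rcases eq_or_ne c 0 with rfl | hc
  · have ha0 : a = 0 := by
      have : a ^ p = 0 := pow_eq_zero_iff two_ne_zero |>.1 (by nlinarith [sq_nonneg (a ^ p)])
      exact (rpow_eq_zero ha (by linarith)).1 this
    rw [ha0, zero_rpow (by nlinarith), mul_zero, zero_div]
    exact hA
  rcases hB.eq_or_lt with rfl | hBpos
  · rw [div_zero]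
    exact hA
  have hsplit : a ^ (2 * (p - 1)) * a ^ 2 = (a ^ p) ^ 2 := by
    rw [mul_comm 2 (p - 1), rpow_mul ha, rpow_two, ← mul_pow, ← rpow_add_one' ha (by linarith),
      sub_add_cancel]
  rw [div_le_iff₀ hBpos]
  refine le_of_mul_le_mul_right ?_ (pow_pos (abs_pos.2 hc) 2 |>.trans_eq (sq_abs c))
  calc k * a ^ (2 * (p - 1)) * c ^ 2 = a ^ (2 * (p - 1)) * (k * c ^ 2) := by ring
    _ ≤ a ^ (2 * (p - 1)) * a ^ 2 := by gcongr
    _ = (a ^ p) ^ 2 := hsplit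
    _ ≤ A * B * c ^ 2 := hac

noncomputable def circleMeasure : Measure ℝ :=
  ENNReal.ofReal (1 / (2 * π)) • volume.restrict (Set.Ioc 0 (2 * π))

instance : IsFiniteMeasure circleMeasure :=
  Measure.smul_finite _ ENNReal.ofReal_ne_top

theorem average_eq_integral_circleMeasure (f : ℝ → ℝ) :
    1 / (2 * π) * ∫ x in (0:ℝ)..(2 * π), f x = ∫ x, f x ∂circleMeasure := by
  rw [circleMeasure, integral_smul_measure, ENNReal.toReal_ofReal (by positivity),
    intervalIntegral.integral_of_le (by positivity), smul_eq_mul]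

theorem Continuous.memLp_circleMeasure {f : ℝ → ℝ} (hf : Continuous f) (q : ENNReal) :
    MemLp f q circleMeasure := by
  obtain ⟨C, hC⟩ := (isCompact_Icc (a := 0) (b := 2 * π)).exists_bound_of_continuousOn
    hf.continuousOn
  refine (MemLp.of_bound hf.aestronglyMeasurable.restrict C ?_).smul_measure ENNReal.ofReal_ne_top
  filter_upwards [ae_restrict_mem measurableSet_Ioc] with x hx
  exact hC x (Set.Ioc_subset_Icc_self hx)

theorem perNorm_nonneg (r : ℝ) (f : ℝ → ℝ) : 0 ≤ perNorm r f := by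
  rw [perNorm, average_eq_integral_circleMeasure]
  exact rpow_nonneg (integral_nonneg fun x => rpow_nonneg (abs_nonneg _) _) _

theorem perNorm_rpow {r : ℝ} (hr : r ≠ 0) (f : ℝ → ℝ) :
    perNorm r f ^ r = ∫ x, |f x| ^ r ∂circleMeasure := by
  rw [perNorm, average_eq_integral_circleMeasure,
    ← rpow_mul (integral_nonneg fun x => rpow_nonneg (abs_nonneg _) _), one_div_mul_cancel hr,
    rpow_one]

theorem integral_abs_rpow_rpow_div {r : ℝ} (hr : r ≠ 0) (s : ℝ) (f : ℝ → ℝ) :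
    (∫ x, |f x| ^ r ∂circleMeasure) ^ (s / r) = perNorm r f ^ s := by
  rw [← perNorm_rpow hr, ← rpow_mul (perNorm_nonneg r f), mul_div_cancel₀ s hr]

theorem integral_abs_rpow_mul_sq_le_perNorm {p : ℝ} (hp : 2 < p) {f g : ℝ → ℝ}
    (hf : Continuous f) (hg : Continuous g) :
    ∫ x, |f x| ^ (p - 2) * g x ^ 2 ∂circleMeasure ≤ perNorm p f ^ (p - 2) * perNorm p g ^ 2 := by
  have hp0 : p ≠ 0 := by linarith
  have h := integral_abs_rpow_mul_sq_le hp (hf.memLp_circleMeasure _) (hg.memLp_circleMeasure _)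
  rwa [integral_abs_rpow_rpow_div hp0, integral_abs_rpow_rpow_div hp0, rpow_two] at h

theorem sq_integral_mul_le_weighted {ρ f g : ℝ → ℝ} (hρ : Continuous ρ) (hρpos : ∀ x, 0 < ρ x)
    (hf : Continuous f) (hg : Continuous g) {s t : ℝ} (hst : s + t = 0) :
    (∫ x, f x * g x ∂circleMeasure) ^ 2 ≤
      (∫ x, ρ x ^ s * f x ^ 2 ∂circleMeasure) * ∫ x, ρ x ^ t * g x ^ 2 ∂circleMeasure := by
  set F := fun x => ρ x ^ (s / 2) * |f x|
  set G := fun x => ρ x ^ (t / 2) * |g x|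
  have hsq : ∀ (r x : ℝ) (h : ℝ → ℝ), (ρ x ^ (r / 2) * |h x|) ^ (2:ℝ) = ρ x ^ r * h x ^ 2 :=
    fun r x h => by
      rw [rpow_two, mul_pow, sq_abs, ← rpow_two, ← rpow_mul (hρpos x).le,
        div_mul_cancel₀ r two_ne_zero]
  have hFG : ∀ x, |f x * g x| = F x * G x := fun x => by
    have : ρ x ^ (s / 2) * ρ x ^ (t / 2) = 1 := by
      rw [← rpow_add (hρpos x), ← add_div, hst, zero_div, rpow_zero]
    simp only [F, G, abs_mul]
    linear_combination (-(|f x| * |g x|)) * this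
  have hcont : ∀ (r : ℝ) (h : ℝ → ℝ), Continuous h →
      Continuous fun x => ρ x ^ (r / 2) * |h x| :=
    fun r h hh => (hρ.rpow_const fun x => Or.inl (hρpos x).ne').mul hh.abs
  have hnonneg : ∀ (r : ℝ) (h : ℝ → ℝ) x, 0 ≤ ρ x ^ (r / 2) * |h x| :=
    fun r h x => mul_nonneg (rpow_nonneg (hρpos x).le _) (abs_nonneg _)
  have holder := integral_mul_le_Lp_mul_Lq_of_nonneg Real.HolderConjugate.two_two
    (ae_of_all _ (hnonneg s f)) (ae_of_all _ (hnonneg t g))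
    ((hcont s f hf).memLp_circleMeasure _) ((hcont t g hg).memLp_circleMeasure _)
  simp only [hsq] at holder
  have hint_nonneg : ∀ (r : ℝ) (h : ℝ → ℝ), 0 ≤ ∫ x, ρ x ^ r * h x ^ 2 ∂circleMeasure :=
    fun r h => integral_nonneg fun x => mul_nonneg (rpow_nonneg (hρpos x).le _) (sq_nonneg _)
  calc (∫ x, f x * g x ∂circleMeasure) ^ 2
      ≤ (∫ x, F x * G x ∂circleMeasure) ^ 2 := by
        rw [← sq_abs]
        gcongr
        simpa only [← hFG, Real.norm_eq_abs] using
          norm_integral_le_integral_norm (fun x => f x * g x)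
    _ ≤ ((∫ x, ρ x ^ s * f x ^ 2 ∂circleMeasure) ^ (1 / (2:ℝ)) *
          (∫ x, ρ x ^ t * g x ^ 2 ∂circleMeasure) ^ (1 / (2:ℝ))) ^ 2 :=
        pow_le_pow_left₀ (integral_nonneg fun x => mul_nonneg (hnonneg s f x) (hnonneg t g x))
          holder 2
    _ = _ := by
        rw [mul_pow, ← rpow_natCast, ← rpow_mul (hint_nonneg s f), ← rpow_natCast,
          ← rpow_mul (hint_nonneg t g)]
        norm_num

theorem lambdaOne_mul_perNorm_sq_le {p : ℝ} (hp : p ≠ 0) {v : ℝ → ℝ} (hv : PeriodicC1 v)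
    (hmean : ∫ x in (0:ℝ)..(2 * π), v x = 0) :
    lambdaOne p * perNorm p v ^ 2 ≤ perNorm p (deriv v) ^ 2 := by
  rcases (perNorm_nonneg p v).eq_or_lt with hzero | hpos
  · rw [← hzero, zero_pow two_ne_zero, mul_zero]
    positivity
  have hv0 : v ≠ 0 := by
    rintro rfl
    simp [perNorm, zero_rpow hp, zero_rpow (inv_ne_zero hp)] at hpos
  have hbdd : BddBelow {l : ℝ | ∃ v : ℝ → ℝ, PeriodicC1 v ∧ v ≠ 0 ∧
      (∫ x in (0:ℝ)..(2 * π), v x) = 0 ∧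
      l = (perNorm p (deriv v)) ^ 2 / (perNorm p v) ^ 2} := by
    refine ⟨0, ?_⟩
    rintro _ ⟨w, -, -, -, rfl⟩
    positivity
  rw [← le_div_iff₀ (by positivity)]
  exact csInf_le hbdd ⟨v, hv, hv0, hmean, rfl⟩

noncomputable def pFlux (p : ℝ) (u : ℝ → ℝ) (x : ℝ) : ℝ :=
  |deriv u x| ^ (p - 2) * deriv u x

theorem hasDerivAt_pFlux {p : ℝ} (hp : 2 < p) {u : ℝ → ℝ} (hu : ContDiff ℝ 2 u) (x : ℝ) :
    HasDerivAt (pFlux p u) ((p - 1) * |deriv u x| ^ (p - 2) * deriv (deriv u) x) x := by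
  have hu' : Differentiable ℝ (deriv u) := (hu.iterate_deriv' 1 1).differentiable one_ne_zero
  refine ((hasDerivAt_abs_rpow_mul_self (q := p - 2) (by linarith) (deriv u x)).comp x
    (hu' x).hasDerivAt).congr_deriv ?_
  ring

theorem continuous_pLap {p : ℝ} (hp : 2 < p) {u : ℝ → ℝ} (hu : ContDiff ℝ 2 u) :
    Continuous (pLap p u) := by
  rw [show pLap p u = _ from funext fun x => (hasDerivAt_pFlux hp hu x).deriv]
  have hu' : Continuous (deriv u) := hu.continuous_deriv one_le_two
  have hu'' : Continuous (deriv (deriv u)) := (hu.iterate_deriv' 1 1).continuous_deriv le_rfl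
  exact (continuous_const.mul (hu'.abs.rpow_const fun _ => Or.inr (by linarith))).mul hu''

theorem perNorm_deriv_rpow_eq_neg_integral_pLap_mul {p : ℝ} (hp : 2 < p) {u : ℝ → ℝ}
    (hper : Function.Periodic u (2 * π)) (hu : ContDiff ℝ 2 u) (c : ℝ) :
    perNorm p (deriv u) ^ p = -∫ x, pLap p u x * (u x - c) ∂circleMeasure := by
  have hibp : ∫ x in (0:ℝ)..(2 * π), pLap p u x * (u x - c) =
      -∫ x in (0:ℝ)..(2 * π), pFlux p u x * deriv u x :=
    Function.Periodic.integral_deriv_mul_eq_neg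
    (fun x => by simp only [pFlux, hper.deriv x]) (fun x => by simp only [hper x])
    (fun x => (hasDerivAt_pFlux hp hu x).differentiableAt.hasDerivAt)
    (fun x => ((hu.differentiable two_ne_zero x).hasDerivAt).sub_const c)
    ((continuous_pLap hp hu).intervalIntegrable _ _)
    ((hu.continuous_deriv one_le_two).intervalIntegrable _ _)
  rw [perNorm_rpow (by linarith), ← average_eq_integral_circleMeasure,
    ← average_eq_integral_circleMeasure, hibp]
  simp only [pFlux, abs_rpow_sub_two_mul_self_mul_self (by linarith : p ≠ 0), mul_neg, neg_neg]

/-- the Poincaré-type estimate of Lemma 2.3. -/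
theorem poincare_type_estimate (p : ℝ) (hp : 2 < p) (u : ℝ → ℝ)
    (hper : Function.Periodic u (2 * π)) (hpos : ∀ x, 0 < u x)
    (hC2 : ContDiff ℝ 2 u) :
    (1 / (2 * π)) * (∫ x in (0:ℝ)..(2 * π), (u x) ^ (2 - p) * (pLap p u x) ^ 2) ≥
      lambdaOne p * (perNorm p (deriv u)) ^ (2 * (p - 1)) / (perNorm p u) ^ (p - 2) := by
  set v : ℝ → ℝ := fun x => u x - (∫ x in (0:ℝ)..(2 * π), u x) / (2 * π)
  have hv : PeriodicC1 v :=
    ⟨fun x => by simp only [v, hper x], (hC2.of_le one_le_two).sub contDiff_const⟩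
  have hmean : ∫ x in (0:ℝ)..(2 * π), v x = 0 := by
    rw [intervalIntegral.integral_sub (hC2.continuous.intervalIntegrable _ _)
      intervalIntegrable_const, intervalIntegral.integral_const, smul_eq_mul]
    field_simp
    ring
  have hA : 0 ≤ ∫ x, u x ^ (2 - p) * pLap p u x ^ 2 ∂circleMeasure :=
    integral_nonneg fun x => mul_nonneg (rpow_nonneg (hpos x).le _) (sq_nonneg _)
  have hmain : (perNorm p (deriv u) ^ p) ^ 2 ≤
      (∫ x, u x ^ (2 - p) * pLap p u x ^ 2 ∂circleMeasure) * perNorm p u ^ (p - 2) *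
        perNorm p v ^ 2 := by
    rw [perNorm_deriv_rpow_eq_neg_integral_pLap_mul hp hper hC2, neg_sq, mul_assoc]
    refine (sq_integral_mul_le_weighted hC2.continuous hpos (continuous_pLap hp hC2)
      hv.2.continuous (s := 2 - p) (t := p - 2) (by ring)).trans ?_
    gcongr
    calc ∫ x, u x ^ (p - 2) * v x ^ 2 ∂circleMeasure
        = ∫ x, |u x| ^ (p - 2) * v x ^ 2 ∂circleMeasure := by simp only [abs_of_pos (hpos _)]
      _ ≤ perNorm p u ^ (p - 2) * perNorm p v ^ 2 :=
        integral_abs_rpow_mul_sq_le_perNorm hp hC2.continuous hv.2.continuous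
  have hpoincare : lambdaOne p * perNorm p v ^ 2 ≤ perNorm p (deriv u) ^ 2 := by
    rw [← show deriv v = deriv u from funext fun x => deriv_sub_const _]
    exact lambdaOne_mul_perNorm_sq_le (by linarith) hv hmean
  rw [average_eq_integral_circleMeasure, ge_iff_le]
  exact mul_rpow_div_le_of_sq_le (by linarith) (perNorm_nonneg _ _) hA
    (rpow_nonneg (perNorm_nonneg _ _) _) hpoincare hmain
end
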